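/- Let I be an open interval and f ∈ C²(I) with f′ > 0, f convex (f″ ≥ 0). Define the set U₀ of generators h ∈ C²(I) with h′ nowhere vanishing, h″ nowhere vanishing, h′/h″ concave, and h′/h″ ≥ f′/f″ (pointwise, assuming f″ > 0 everywhere). If m := the concave envelope of f′/f″ among continuous functions on I is finite and g ∈ C²(I) solves g′/g″ = m with g″ nowhere vanishing, then A_g is Jensen convex, A_g ≤ A_f, and A_h ≤ A_g for every h ∈ U₀; hence sup{A_h(x) : h ∈ U₀} = A_g(x) for every x. -/

import Mathlib

/-!
Replacing a generator `k` by `-k` does not change `A_k`, and `0 < k'/k''` forces `k'` and `k''`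
to share one constant sign on `I`, so all generators may be taken increasing and convex.

For such `h` and `k`, the condition `h''/h' ≤ k''/k'` makes `k'/h'` nondecreasing, hence
`k ∘ h⁻¹` convex, and Jensen's inequality for `k ∘ h⁻¹` reads `k (A_h a) ≤ k (A_k a)`.

`A_k` is Jensen convex as soon as `H (s, t) = k ((k⁻¹ s + k⁻¹ t) / 2)` is concave on `k(I)²`.
Along a segment, write `a = k⁻¹ (s + τ α)`, `p = a'`, similarly `b`, `q`, and `c = (a + b) / 2`.
With `u = k'/k''` one finds `p' = -p² / u a`, so the second derivative of `H` along the segment is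
`k'' c ((p + q) / 2)² - k' c (p² / u a + q² / u b) / 2`, which is `≤ 0` by Cauchy–Schwarz,
`(p + q)² ≤ (u a + u b) (p² / u a + q² / u b)`, and concavity of `u`, `(u a + u b) / 2 ≤ u c`.

The envelope `m` is concave, dominates `f'/f''`, and lies below `h'/h''` for every `h ∈ U₀`.
Hence `g ∈ U₀`, and `A_h ≤ A_g ≤ A_f` by the comparison above.
-/

/-- The `n`-variable quasiarithmetic mean on `I` generated by `f`. -/
noncomputable def QAMean (I : Set ℝ) (f : ℝ → ℝ) {n : ℕ} (a : Fin n → ℝ) : ℝ :=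
  Function.invFunOn f I ((∑ i, f (a i)) / n)

/-- The family `U₀` of generators of convex quasiarithmetic minorants of `A_f`. -/
def memU0 (I : Set ℝ) (f : ℝ → ℝ) (h : ℝ → ℝ) : Prop :=
  ContDiffOn ℝ 2 h I ∧ (∀ x ∈ I, deriv h x ≠ 0) ∧
  (∀ x ∈ I, deriv (deriv h) x ≠ 0) ∧
  ConcaveOn ℝ I (fun x => deriv h x / deriv (deriv h) x) ∧
  (∀ x ∈ I, deriv f x / deriv (deriv f) x ≤ deriv h x / deriv (deriv h) x)

open Set Function Filter Topology

section Averages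

variable {E : Type*} [AddCommGroup E] [Module ℝ E] {s : Set E} {n : ℕ} [NeZero n]

theorem Convex.inv_smul_sum_mem (hs : Convex ℝ s) {z : Fin n → E} (hz : ∀ i, z i ∈ s) :
    (n : ℝ)⁻¹ • ∑ i, z i ∈ s := by
  rw [Finset.smul_sum]
  exact hs.sum_mem (fun _ _ => by positivity) (by simp [NeZero.ne n]) fun i _ => hz i

theorem ConvexOn.map_inv_smul_sum_le {φ : E → ℝ} (hφ : ConvexOn ℝ s φ) {z : Fin n → E}
    (hz : ∀ i, z i ∈ s) : φ ((n : ℝ)⁻¹ • ∑ i, z i) ≤ (∑ i, φ (z i)) / n := by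
  rw [Finset.smul_sum, div_eq_inv_mul, Finset.mul_sum]
  exact hφ.map_sum_le (fun _ _ => by positivity) (by simp [NeZero.ne n]) fun i _ => hz i

theorem ConcaveOn.le_map_inv_smul_sum {φ : E → ℝ} (hφ : ConcaveOn ℝ s φ) {z : Fin n → E}
    (hz : ∀ i, z i ∈ s) : (∑ i, φ (z i)) / n ≤ φ ((n : ℝ)⁻¹ • ∑ i, z i) := by
  simpa [Finset.sum_neg_distrib, neg_div] using hφ.neg.map_inv_smul_sum_le hz

end Averages

theorem IsPreconnected.forall_pos_or_forall_neg {s : Set ℝ} {u : ℝ → ℝ} (hs : IsPreconnected s)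
    (hu : ContinuousOn u s) (h0 : ∀ x ∈ s, u x ≠ 0) :
    (∀ x ∈ s, 0 < u x) ∨ (∀ x ∈ s, u x < 0) := by
  by_contra! ⟨⟨x, hx, hux⟩, ⟨y, hy, huy⟩⟩
  obtain ⟨z, hz, huz⟩ := hs.intermediate_value hx hy hu ⟨hux, huy⟩
  exact h0 z hz huz

theorem Convex.add_div_two_mem {I : Set ℝ} (hI : Convex ℝ I) {x y : ℝ} (hx : x ∈ I)
    (hy : y ∈ I) : (x + y) / 2 ∈ I := by
  convert hI.midpoint_mem hx hy using 1
  rw [midpoint_eq_smul_add, smul_eq_mul, invOf_eq_inv]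
  ring

theorem ConcaveOn.add_div_two_le {I : Set ℝ} {u : ℝ → ℝ} (hu : ConcaveOn ℝ I u) {x y : ℝ}
    (hx : x ∈ I) (hy : y ∈ I) : (u x + u y) / 2 ≤ u ((x + y) / 2) := by
  have h := hu.2 hx hy (by norm_num : (0 : ℝ) ≤ 1 / 2) (by norm_num : (0 : ℝ) ≤ 1 / 2)
    (by norm_num)
  have hmid : (1 / 2 : ℝ) • x + (1 / 2 : ℝ) • y = (x + y) / 2 := by
    simp only [smul_eq_mul]; ring
  rw [hmid, smul_eq_mul, smul_eq_mul] at h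
  linarith

theorem ConcaveOn.of_segment {E : Type*} [AddCommGroup E] [Module ℝ E] {S : Set E} {F : E → ℝ}
    (hS : Convex ℝ S)
    (hseg : ∀ P ∈ S, ∀ Q ∈ S, ConcaveOn ℝ (Icc 0 1) fun τ : ℝ => F (P + τ • (Q - P))) :
    ConcaveOn ℝ S F := by
  refine ⟨hS, fun P hP Q hQ a b ha hb hab => ?_⟩
  have key := (hseg P hP Q hQ).2 (left_mem_Icc.2 zero_le_one) (right_mem_Icc.2 zero_le_one)
    ha hb hab
  have hpt : a • P + b • Q = P + b • (Q - P) := by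
    obtain rfl : a = 1 - b := by linarith
    rw [sub_smul, one_smul, smul_sub]; abel
  simpa [hpt] using key

theorem sq_add_le_mul_add_div {p q u₁ u₂ : ℝ} (hu₁ : 0 < u₁) (hu₂ : 0 < u₂) :
    (p + q) ^ 2 ≤ (u₁ + u₂) * (p ^ 2 / u₁ + q ^ 2 / u₂) := by
  have key : (p + q) ^ 2 * (u₁ * u₂) ≤ (u₁ + u₂) * (p ^ 2 * u₂ + q ^ 2 * u₁) := by
    nlinarith [sq_nonneg (p * u₂ - q * u₁)]
  rw [div_add_div _ _ hu₁.ne' hu₂.ne', mul_div_assoc', le_div_iff₀ (by positivity)]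
  linarith

theorem mul_add_div_two_sq_le {K₁ K₂ u₁ u₂ p q : ℝ} (hK₂ : 0 < K₂) (hu₁ : 0 < u₁)
    (hu₂ : 0 < u₂) (hu : (u₁ + u₂) / 2 ≤ K₁ / K₂) :
    K₂ * ((p + q) / 2) ^ 2 ≤ K₁ * ((p ^ 2 / u₁ + q ^ 2 / u₂) / 2) := by
  have hS : 0 ≤ (p ^ 2 / u₁ + q ^ 2 / u₂) / 2 := by positivity
  calc K₂ * ((p + q) / 2) ^ 2 ≤ K₂ * ((u₁ + u₂) / 2 * ((p ^ 2 / u₁ + q ^ 2 / u₂) / 2)) := by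
        gcongr
        linarith [sq_add_le_mul_add_div (p := p) (q := q) hu₁ hu₂]
    _ ≤ K₂ * (K₁ / K₂ * ((p ^ 2 / u₁ + q ^ 2 / u₂) / 2)) := by gcongr
    _ = K₁ * ((p ^ 2 / u₁ + q ^ 2 / u₂) / 2) := by field_simp

section InverseFunction

variable {I : Set ℝ} {k : ℝ → ℝ}

theorem ContDiffOn.hasDerivAt_of_isOpen {n : WithTop ℕ∞} (hk : ContDiffOn ℝ n k I)
    (hn : n ≠ 0) (hI : IsOpen I) {x : ℝ} (hx : x ∈ I) : HasDerivAt k (deriv k x) x :=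
  ((hk.differentiableOn hn).differentiableAt (hI.mem_nhds hx)).hasDerivAt

theorem ContDiffOn.hasDerivAt_deriv_of_isOpen (hk : ContDiffOn ℝ 2 k I) (hI : IsOpen I)
    {x : ℝ} (hx : x ∈ I) : HasDerivAt (deriv k) (deriv (deriv k) x) x :=
  (hk.deriv_of_isOpen hI (by norm_num : (1 : WithTop ℕ∞) + 1 ≤ 2)).hasDerivAt_of_isOpen
    one_ne_zero hI hx

theorem strictMonoOn_of_deriv_pos_of_isOpen (hI : IsOpen I) (hIc : Convex ℝ I)
    (hk : ContinuousOn k I) (hk' : ∀ x ∈ I, 0 < deriv k x) : StrictMonoOn k I :=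
  strictMonoOn_of_deriv_pos hIc hk fun x hx => hk' x (hI.interior_eq ▸ hx)

theorem isOpen_image_of_deriv_ne_zero (hI : IsOpen I) (hk : ContDiffOn ℝ 1 k I)
    (hk' : ∀ x ∈ I, deriv k x ≠ 0) : IsOpen (k '' I) := by
  refine isOpen_iff_mem_nhds.2 ?_
  rintro _ ⟨x, hx, rfl⟩
  have hstrict := (hk.contDiffAt (hI.mem_nhds hx)).hasStrictDerivAt one_ne_zero
  rw [← hstrict.map_nhds_eq (hk' x hx)]
  exact image_mem_map (hI.mem_nhds hx)

theorem StrictMonoOn.monotoneOn_invFunOn (hk : StrictMonoOn k I) :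
    MonotoneOn (invFunOn k I) (k '' I) := by
  rintro _ ⟨x, hx, rfl⟩ _ ⟨y, hy, rfl⟩ hxy
  rw [hk.injOn.leftInvOn_invFunOn hx, hk.injOn.leftInvOn_invFunOn hy]
  exact (hk.le_iff_le hx hy).1 hxy

theorem hasDerivAt_invFunOn (hI : IsOpen I) (hk : ContDiffOn ℝ 1 k I)
    (hmono : StrictMonoOn k I) (hk' : ∀ x ∈ I, deriv k x ≠ 0) {v : ℝ} (hv : v ∈ k '' I) :
    HasDerivAt (invFunOn k I) (deriv k (invFunOn k I v))⁻¹ v := by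
  have hJ : k '' I ∈ 𝓝 v := (isOpen_image_of_deriv_ne_zero hI hk hk').mem_nhds hv
  obtain ⟨x, hx, rfl⟩ := hv
  have hinv : invFunOn k I (k x) = x := hmono.injOn.leftInvOn_invFunOn hx
  have hcont : ContinuousAt (invFunOn k I) (k x) := by
    refine continuousAt_of_monotoneOn_of_image_mem_nhds hmono.monotoneOn_invFunOn hJ ?_
    rw [hmono.injOn.leftInvOn_invFunOn.image_image, hinv]
    exact hI.mem_nhds hx
  rw [hinv]
  refine HasDerivAt.of_local_left_inverse (f := k) hcont ?_ (hk' x hx) ?_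
  · rw [hinv]
    exact hk.hasDerivAt_of_isOpen one_ne_zero hI hx
  · filter_upwards [hJ] with y hy using invFunOn_eq (by simpa using hy)

theorem hasDerivAt_invFunOn_comp_line (hI : IsOpen I) (hk : ContDiffOn ℝ 1 k I)
    (hmono : StrictMonoOn k I) (hk' : ∀ x ∈ I, deriv k x ≠ 0) {s α τ : ℝ}
    (hv : s + τ * α ∈ k '' I) :
    HasDerivAt (fun τ => invFunOn k I (s + τ * α))
      (α / deriv k (invFunOn k I (s + τ * α))) τ := by
  rw [div_eq_inv_mul]
  exact (hasDerivAt_invFunOn hI hk hmono hk' hv).comp τ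
    (((hasDerivAt_id τ).mul_const α).const_add s |>.congr_deriv (one_mul α))

theorem hasDerivAt_div_deriv_comp_invFunOn_line (hI : IsOpen I) (hk : ContDiffOn ℝ 2 k I)
    (hmono : StrictMonoOn k I) (hk' : ∀ x ∈ I, deriv k x ≠ 0) {s α τ : ℝ}
    (hv : s + τ * α ∈ k '' I) :
    HasDerivAt (fun τ => α / deriv k (invFunOn k I (s + τ * α)))
      (-(α / deriv k (invFunOn k I (s + τ * α))) ^ 2 /
        (deriv k (invFunOn k I (s + τ * α)) / deriv (deriv k) (invFunOn k I (s + τ * α)))) τ := by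
  have hx : invFunOn k I (s + τ * α) ∈ I := invFunOn_mem (by simpa using hv)
  have hA := (hk.hasDerivAt_deriv_of_isOpen hI hx).comp τ
    (hasDerivAt_invFunOn_comp_line hI (hk.of_le one_le_two) hmono hk' hv)
  refine ((hasDerivAt_const τ α).div hA (hk' _ hx)).congr_deriv ?_
  simp only [comp_apply]
  field_simp
  ring

end InverseFunction

section QAMean

variable {I : Set ℝ} {k : ℝ → ℝ} {n : ℕ} [NeZero n] {a : Fin n → ℝ}

theorem exists_mem_apply_eq_avg (hIc : Convex ℝ I) (hk : ContinuousOn k I)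
    (ha : ∀ i, a i ∈ I) : ∃ z ∈ I, k z = (∑ i, k (a i)) / n := by
  have hJ : Convex ℝ (k '' I) := (hIc.isPreconnected.image k hk).convex
  have := hJ.inv_smul_sum_mem fun i => mem_image_of_mem k (ha i)
  rwa [smul_eq_mul, inv_mul_eq_div] at this

theorem QAMean_mem (hIc : Convex ℝ I) (hk : ContinuousOn k I) (ha : ∀ i, a i ∈ I) :
    QAMean I k a ∈ I :=
  invFunOn_mem (exists_mem_apply_eq_avg hIc hk ha)

theorem apply_QAMean (hIc : Convex ℝ I) (hk : ContinuousOn k I) (ha : ∀ i, a i ∈ I) :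
    k (QAMean I k a) = (∑ i, k (a i)) / n :=
  invFunOn_eq (exists_mem_apply_eq_avg hIc hk ha)

theorem QAMean_neg (hIc : Convex ℝ I) (hk : ContinuousOn k I) (hinj : InjOn k I)
    (ha : ∀ i, a i ∈ I) : QAMean I (-k) a = QAMean I k a := by
  refine hinj (QAMean_mem hIc hk.neg ha) (QAMean_mem hIc hk ha) (neg_injective ?_)
  rw [← Pi.neg_apply k, apply_QAMean hIc hk.neg ha, apply_QAMean hIc hk ha]
  simp [Finset.sum_neg_distrib, neg_div]

end QAMean

section Comparison

variable {I : Set ℝ} {h k : ℝ → ℝ}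

theorem monotoneOn_deriv_div_deriv (hI : IsOpen I) (hIc : Convex ℝ I)
    (hh : ContDiffOn ℝ 2 h I) (hk : ContDiffOn ℝ 2 k I) (hh' : ∀ x ∈ I, 0 < deriv h x)
    (hcmp : ∀ x ∈ I, deriv k x * deriv (deriv h) x ≤ deriv h x * deriv (deriv k) x) :
    MonotoneOn (fun x => deriv k x / deriv h x) I := by
  have hderiv : ∀ x ∈ I, HasDerivAt (fun x => deriv k x / deriv h x)
      ((deriv (deriv k) x * deriv h x - deriv k x * deriv (deriv h) x) / deriv h x ^ 2) x :=
    fun x hx => (hk.hasDerivAt_deriv_of_isOpen hI hx).div (hh.hasDerivAt_deriv_of_isOpen hI hx)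
      (hh' x hx).ne'
  refine monotoneOn_of_deriv_nonneg hIc (fun x hx => (hderiv x hx).continuousAt.continuousWithinAt)
    (fun x hx => (hderiv x (interior_subset hx)).differentiableAt.differentiableWithinAt)
    fun x hx => ?_
  rw [hI.interior_eq] at hx
  rw [(hderiv x hx).deriv]
  exact div_nonneg (by linarith [hcmp x hx]) (sq_nonneg _)

theorem convexOn_comp_invFunOn (hI : IsOpen I) (hIc : Convex ℝ I) (hh : ContDiffOn ℝ 1 h I)
    (hh' : ∀ x ∈ I, 0 < deriv h x) (hk : DifferentiableOn ℝ k I)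
    (hmono : MonotoneOn (fun x => deriv k x / deriv h x) I) :
    ConvexOn ℝ (h '' I) (k ∘ invFunOn h I) := by
  have hhmono := strictMonoOn_of_deriv_pos_of_isOpen hI hIc hh.continuousOn hh'
  have hJ : IsOpen (h '' I) := isOpen_image_of_deriv_ne_zero hI hh fun x hx => (hh' x hx).ne'
  have hmaps : MapsTo (invFunOn h I) (h '' I) I := fun v hv => invFunOn_mem (by simpa using hv)
  have hderiv : ∀ v ∈ h '' I, HasDerivAt (k ∘ invFunOn h I)
      (deriv k (invFunOn h I v) / deriv h (invFunOn h I v)) v := fun v hv => by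
    rw [div_eq_mul_inv]
    exact ((hk.differentiableAt (hI.mem_nhds (hmaps hv))).hasDerivAt).comp v
      (hasDerivAt_invFunOn hI hh hhmono (fun x hx => (hh' x hx).ne') hv)
  refine MonotoneOn.convexOn_of_deriv (hIc.isPreconnected.image h hh.continuousOn).convex
    (fun v hv => (hderiv v hv).continuousAt.continuousWithinAt)
    (fun v hv => (hderiv v (interior_subset hv)).differentiableAt.differentiableWithinAt) ?_
  rw [hJ.interior_eq]
  exact (hmono.comp hhmono.monotoneOn_invFunOn hmaps).congr fun v hv => (hderiv v hv).deriv.symm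

theorem QAMean_le_of_monotoneOn (hI : IsOpen I) (hIc : Convex ℝ I)
    (hh : ContDiffOn ℝ 1 h I) (hk : ContDiffOn ℝ 1 k I) (hh' : ∀ x ∈ I, 0 < deriv h x)
    (hk' : ∀ x ∈ I, 0 < deriv k x) (hmono : MonotoneOn (fun x => deriv k x / deriv h x) I)
    {n : ℕ} [NeZero n] {a : Fin n → ℝ} (ha : ∀ i, a i ∈ I) :
    QAMean I h a ≤ QAMean I k a := by
  have hhmono := strictMonoOn_of_deriv_pos_of_isOpen hI hIc hh.continuousOn hh'
  have hkmono := strictMonoOn_of_deriv_pos_of_isOpen hI hIc hk.continuousOn hk'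
  have hjensen := (convexOn_comp_invFunOn hI hIc hh hh' (hk.differentiableOn one_ne_zero)
    hmono).map_inv_smul_sum_le fun i => mem_image_of_mem h (ha i)
  simp only [comp_apply, hhmono.injOn.leftInvOn_invFunOn (ha _), smul_eq_mul,
    inv_mul_eq_div] at hjensen
  rw [← apply_QAMean hIc hk.continuousOn ha] at hjensen
  exact (hkmono.le_iff_le (QAMean_mem hIc hh.continuousOn ha)
    (QAMean_mem hIc hk.continuousOn ha)).1 hjensen

end Comparison

section MidpointConvexity

variable {I : Set ℝ} {k : ℝ → ℝ}

theorem concaveOn_Icc_comp_midpoint_invFunOn (hI : IsOpen I) (hIc : Convex ℝ I)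
    (hk : ContDiffOn ℝ 2 k I) (hk' : ∀ x ∈ I, 0 < deriv k x)
    (hk'' : ∀ x ∈ I, 0 < deriv (deriv k) x)
    (hu : ConcaveOn ℝ I fun x => deriv k x / deriv (deriv k) x) {s α t β : ℝ}
    (hs : ∀ τ ∈ Icc (0 : ℝ) 1, s + τ * α ∈ k '' I)
    (ht : ∀ τ ∈ Icc (0 : ℝ) 1, t + τ * β ∈ k '' I) :
    ConcaveOn ℝ (Icc 0 1)
      fun τ => k ((invFunOn k I (s + τ * α) + invFunOn k I (t + τ * β)) / 2) := by
  have hmono := strictMonoOn_of_deriv_pos_of_isOpen hI hIc hk.continuousOn hk'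
  have hk'ne : ∀ x ∈ I, deriv k x ≠ 0 := fun x hx => (hk' x hx).ne'
  set u : ℝ → ℝ := fun x => deriv k x / deriv (deriv k) x
  set A : ℝ → ℝ := fun τ => invFunOn k I (s + τ * α)
  set B : ℝ → ℝ := fun τ => invFunOn k I (t + τ * β)
  set p : ℝ → ℝ := fun τ => α / deriv k (A τ)
  set q : ℝ → ℝ := fun τ => β / deriv k (B τ)
  set c : ℝ → ℝ := fun τ => (A τ + B τ) / 2
  have hA : ∀ τ ∈ Icc (0 : ℝ) 1, A τ ∈ I := fun τ hτ => invFunOn_mem (by simpa using hs τ hτ)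
  have hB : ∀ τ ∈ Icc (0 : ℝ) 1, B τ ∈ I := fun τ hτ => invFunOn_mem (by simpa using ht τ hτ)
  have hc : ∀ τ ∈ Icc (0 : ℝ) 1, c τ ∈ I := fun τ hτ => hIc.add_div_two_mem (hA τ hτ) (hB τ hτ)
  have hcd : ∀ τ ∈ Icc (0 : ℝ) 1, HasDerivAt c ((p τ + q τ) / 2) τ := fun τ hτ =>
    ((hasDerivAt_invFunOn_comp_line hI (hk.of_le one_le_two) hmono hk'ne (hs τ hτ)).add
      (hasDerivAt_invFunOn_comp_line hI (hk.of_le one_le_two) hmono hk'ne (ht τ hτ))).div_const 2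
  have hφ : ∀ τ ∈ Icc (0 : ℝ) 1,
      HasDerivAt (fun τ => k (c τ)) (deriv k (c τ) * ((p τ + q τ) / 2)) τ := fun τ hτ =>
    (hk.hasDerivAt_of_isOpen two_ne_zero hI (hc τ hτ)).comp τ (hcd τ hτ)
  have hφ' : ∀ τ ∈ Icc (0 : ℝ) 1, HasDerivAt (fun τ => deriv k (c τ) * ((p τ + q τ) / 2))
      (deriv (deriv k) (c τ) * ((p τ + q τ) / 2) ^ 2 -
        deriv k (c τ) * ((p τ ^ 2 / u (A τ) + q τ ^ 2 / u (B τ)) / 2)) τ := fun τ hτ => by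
    have hpq := ((hasDerivAt_div_deriv_comp_invFunOn_line hI hk hmono hk'ne (hs τ hτ)).add
      (hasDerivAt_div_deriv_comp_invFunOn_line hI hk hmono hk'ne (ht τ hτ))).div_const 2
    refine (((hk.hasDerivAt_deriv_of_isOpen hI (hc τ hτ)).comp τ (hcd τ hτ)).mul hpq).congr_deriv ?_
    simp only [comp_apply, Pi.add_apply, p, q, u, A, B]
    ring
  refine concaveOn_of_hasDerivWithinAt2_nonpos (convex_Icc 0 1)
    (fun τ hτ => (hφ τ hτ).continuousAt.continuousWithinAt)
    (fun τ hτ => (hφ τ (interior_subset hτ)).hasDerivWithinAt)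
    (fun τ hτ => (hφ' τ (interior_subset hτ)).hasDerivWithinAt) fun τ hτ => ?_
  replace hτ := interior_subset hτ
  rw [sub_nonpos]
  exact mul_add_div_two_sq_le (hk'' _ (hc τ hτ))
    (div_pos (hk' _ (hA τ hτ)) (hk'' _ (hA τ hτ))) (div_pos (hk' _ (hB τ hτ)) (hk'' _ (hB τ hτ)))
    (hu.add_div_two_le (hA τ hτ) (hB τ hτ))

theorem concaveOn_comp_midpoint_invFunOn (hI : IsOpen I) (hIc : Convex ℝ I)
    (hk : ContDiffOn ℝ 2 k I) (hk' : ∀ x ∈ I, 0 < deriv k x)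
    (hk'' : ∀ x ∈ I, 0 < deriv (deriv k) x)
    (hu : ConcaveOn ℝ I fun x => deriv k x / deriv (deriv k) x) :
    ConcaveOn ℝ ((k '' I) ×ˢ (k '' I))
      fun P : ℝ × ℝ => k ((invFunOn k I P.1 + invFunOn k I P.2) / 2) := by
  have hJ : Convex ℝ (k '' I) := (hIc.isPreconnected.image k hk.continuousOn).convex
  refine ConcaveOn.of_segment (hJ.prod hJ) fun P hP Q hQ => ?_
  simpa using concaveOn_Icc_comp_midpoint_invFunOn hI hIc hk hk' hk'' hu
    (fun τ hτ => hJ.add_smul_sub_mem hP.1 hQ.1 hτ) (fun τ hτ => hJ.add_smul_sub_mem hP.2 hQ.2 hτ)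

theorem QAMean_add_div_two_le_of_deriv_pos (hI : IsOpen I) (hIc : Convex ℝ I)
    (hk : ContDiffOn ℝ 2 k I) (hk' : ∀ x ∈ I, 0 < deriv k x)
    (hk'' : ∀ x ∈ I, 0 < deriv (deriv k) x)
    (hu : ConcaveOn ℝ I fun x => deriv k x / deriv (deriv k) x) {n : ℕ} [NeZero n]
    {x y : Fin n → ℝ} (hx : ∀ i, x i ∈ I) (hy : ∀ i, y i ∈ I) :
    QAMean I k (fun i => (x i + y i) / 2) ≤ (QAMean I k x + QAMean I k y) / 2 := by
  have hmono := strictMonoOn_of_deriv_pos_of_isOpen hI hIc hk.continuousOn hk'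
  have hmid : ∀ i, (x i + y i) / 2 ∈ I := fun i => hIc.add_div_two_mem (hx i) (hy i)
  have hjensen := (concaveOn_comp_midpoint_invFunOn hI hIc hk hk' hk'' hu).le_map_inv_smul_sum
    (z := fun i => (k (x i), k (y i)))
    fun i => ⟨mem_image_of_mem k (hx i), mem_image_of_mem k (hy i)⟩
  simp only [hmono.injOn.leftInvOn_invFunOn (hx _), hmono.injOn.leftInvOn_invFunOn (hy _),
    Prod.smul_fst, Prod.smul_snd, Prod.fst_sum, Prod.snd_sum, smul_eq_mul,
    inv_mul_eq_div] at hjensen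
  rw [← apply_QAMean hIc hk.continuousOn hmid] at hjensen
  exact (hmono.le_iff_le (QAMean_mem hIc hk.continuousOn hmid)
    (hIc.add_div_two_mem (QAMean_mem hIc hk.continuousOn hx)
      (QAMean_mem hIc hk.continuousOn hy))).1 hjensen

end MidpointConvexity

section Normalization

variable {I : Set ℝ} {h k : ℝ → ℝ}

theorem exists_deriv_pos_of_div_deriv_pos (hI : IsOpen I) (hIc : Convex ℝ I)
    (hk : ContDiffOn ℝ 2 k I) (hr : ∀ x ∈ I, 0 < deriv k x / deriv (deriv k) x) :
    ∃ k₁ : ℝ → ℝ, ContDiffOn ℝ 2 k₁ I ∧ (∀ x ∈ I, 0 < deriv k₁ x) ∧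
      (∀ x ∈ I, 0 < deriv (deriv k₁) x) ∧
      (∀ x ∈ I, deriv k₁ x / deriv (deriv k₁) x = deriv k x / deriv (deriv k) x) ∧
      ∀ {n : ℕ} [NeZero n] (a : Fin n → ℝ), (∀ i, a i ∈ I) → QAMean I k₁ a = QAMean I k a := by
  have hsigns : ∀ x ∈ I, 0 < deriv k x ∧ 0 < deriv (deriv k) x ∨
      deriv k x < 0 ∧ deriv (deriv k) x < 0 := fun x hx => div_pos_iff.1 (hr x hx)
  rcases hIc.isPreconnected.forall_pos_or_forall_neg (hk.continuousOn_deriv_of_isOpen hI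
    one_le_two) (fun x hx => (div_ne_zero_iff.1 (hr x hx).ne').1) with hpos | hneg
  · refine ⟨k, hk, hpos, fun x hx => ?_, fun _ _ => rfl, fun _ _ => rfl⟩
    exact (hsigns x hx).elim And.right fun hs => absurd hs.1 (hpos x hx).not_gt
  · have hd : ∀ x, deriv (-k) x = -deriv k x := fun x => deriv.neg
    have hdd : ∀ x, deriv (deriv (-k)) x = -deriv (deriv k) x := fun x => by
      rw [deriv.neg', deriv.fun_neg]
    refine ⟨-k, hk.neg, fun x hx => ?_, fun x hx => ?_, fun x _ => ?_, fun a ha => ?_⟩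
    · simpa [hd] using hneg x hx
    · have := (hsigns x hx).elim (fun hs => absurd hs.1 (hneg x hx).not_gt) And.right
      simpa [hdd] using this
    · rw [hd, hdd, neg_div_neg_eq]
    · exact QAMean_neg hIc hk.continuousOn
        (strictAntiOn_of_deriv_neg hIc hk.continuousOn fun x hx =>
          hneg x (hI.interior_eq ▸ hx)).injOn ha

theorem QAMean_le_of_div_deriv_le (hI : IsOpen I) (hIc : Convex ℝ I)
    (hh : ContDiffOn ℝ 2 h I) (hk : ContDiffOn ℝ 2 k I)
    (hkr : ∀ x ∈ I, 0 < deriv k x / deriv (deriv k) x)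
    (hle : ∀ x ∈ I, deriv k x / deriv (deriv k) x ≤ deriv h x / deriv (deriv h) x)
    {n : ℕ} [NeZero n] {a : Fin n → ℝ} (ha : ∀ i, a i ∈ I) :
    QAMean I h a ≤ QAMean I k a := by
  obtain ⟨h₁, hh₁, hh₁', hh₁'', hh₁r, hh₁a⟩ := exists_deriv_pos_of_div_deriv_pos hI hIc hh
    fun x hx => (hkr x hx).trans_le (hle x hx)
  obtain ⟨k₁, hk₁, hk₁', hk₁'', hk₁r, hk₁a⟩ := exists_deriv_pos_of_div_deriv_pos hI hIc hk hkr
  have hcmp : ∀ x ∈ I, deriv k₁ x * deriv (deriv h₁) x ≤ deriv h₁ x * deriv (deriv k₁) x :=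
    fun x hx => (div_le_div_iff₀ (hk₁'' x hx) (hh₁'' x hx)).1 <| by
      rw [hk₁r x hx, hh₁r x hx]; exact hle x hx
  rw [← hh₁a a ha, ← hk₁a a ha]
  exact QAMean_le_of_monotoneOn hI hIc (hh₁.of_le one_le_two) (hk₁.of_le one_le_two) hh₁' hk₁'
    (monotoneOn_deriv_div_deriv hI hIc hh₁ hk₁ hh₁' hcmp) ha

theorem QAMean_add_div_two_le (hI : IsOpen I) (hIc : Convex ℝ I)
    (hk : ContDiffOn ℝ 2 k I) (hr : ∀ x ∈ I, 0 < deriv k x / deriv (deriv k) x)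
    (hu : ConcaveOn ℝ I fun x => deriv k x / deriv (deriv k) x) {n : ℕ} [NeZero n]
    {x y : Fin n → ℝ} (hx : ∀ i, x i ∈ I) (hy : ∀ i, y i ∈ I) :
    QAMean I k (fun i => (x i + y i) / 2) ≤ (QAMean I k x + QAMean I k y) / 2 := by
  obtain ⟨k₁, hk₁, hk₁', hk₁'', hk₁r, hk₁a⟩ := exists_deriv_pos_of_div_deriv_pos hI hIc hk hr
  rw [← hk₁a x hx, ← hk₁a y hy, ← hk₁a _ fun i => hIc.add_div_two_mem (hx i) (hy i)]
  exact QAMean_add_div_two_le_of_deriv_pos hI hIc hk₁ hk₁' hk₁''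
    (hu.congr fun z hz => (hk₁r z hz).symm) hx hy

end Normalization

/-- The values at `x` of the continuous concave majorants of `u` on `I`; their infimum is the
concave envelope `conc(u)(x)`, which is the junk value `0` when the set is empty. -/
def concaveMajorantValues (I : Set ℝ) (u : ℝ → ℝ) (x : ℝ) : Set ℝ :=
  {t | ∃ ψ : ℝ → ℝ, ContinuousOn ψ I ∧ ConcaveOn ℝ I ψ ∧ (∀ y ∈ I, u y ≤ ψ y) ∧ t = ψ x}

section ConcaveEnvelope

variable {I : Set ℝ} {u : ℝ → ℝ} {x : ℝ}

theorem le_sInf_concaveMajorantValues (hx : x ∈ I)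
    (hne : (concaveMajorantValues I u x).Nonempty) :
    u x ≤ sInf (concaveMajorantValues I u x) :=
  le_csInf hne <| by rintro _ ⟨ψ, -, -, hψu, rfl⟩; exact hψu x hx

theorem sInf_concaveMajorantValues_le (hx : x ∈ I) {ψ : ℝ → ℝ} (hψc : ContinuousOn ψ I)
    (hψ : ConcaveOn ℝ I ψ) (hψu : ∀ y ∈ I, u y ≤ ψ y) :
    sInf (concaveMajorantValues I u x) ≤ ψ x :=
  csInf_le ⟨u x, by rintro _ ⟨φ, -, -, hφu, rfl⟩; exact hφu x hx⟩ ⟨ψ, hψc, hψ, hψu, rfl⟩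

theorem concaveOn_sInf_concaveMajorantValues (hI : Convex ℝ I)
    (hne : ∀ x ∈ I, (concaveMajorantValues I u x).Nonempty) :
    ConcaveOn ℝ I fun x => sInf (concaveMajorantValues I u x) := by
  refine ⟨hI, fun x hx y hy a b ha hb hab => le_csInf (hne _ (hI hx hy ha hb hab)) ?_⟩
  rintro _ ⟨ψ, hψc, hψ, hψu, rfl⟩
  calc a • sInf (concaveMajorantValues I u x) + b • sInf (concaveMajorantValues I u y)
      ≤ a • ψ x + b • ψ y := by
        gcongr
        · exact sInf_concaveMajorantValues_le hx hψc hψ hψu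
        · exact sInf_concaveMajorantValues_le hy hψc hψ hψu
    _ ≤ ψ (a • x + b • y) := hψ.2 hx hy ha hb hab

end ConcaveEnvelope

theorem stmt_15 (I : Set ℝ) (hIop : IsOpen I) (hIcv : Convex ℝ I)
    (f : ℝ → ℝ) (hf : ContDiffOn ℝ 2 f I)
    (hf' : ∀ x ∈ I, 0 < deriv f x) (hf'' : ∀ x ∈ I, 0 < deriv (deriv f) x)
    (m : ℝ → ℝ)
    (hm : ∀ x ∈ I, m x = sInf {t : ℝ | ∃ ψ : ℝ → ℝ, ContinuousOn ψ I ∧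
      ConcaveOn ℝ I ψ ∧ (∀ y ∈ I, deriv f y / deriv (deriv f) y ≤ ψ y) ∧ t = ψ x})
    (hmne : ∀ x ∈ I, {t : ℝ | ∃ ψ : ℝ → ℝ, ContinuousOn ψ I ∧
      ConcaveOn ℝ I ψ ∧ (∀ y ∈ I, deriv f y / deriv (deriv f) y ≤ ψ y) ∧ t = ψ x}.Nonempty)
    (g : ℝ → ℝ) (hg : ContDiffOn ℝ 2 g I)
    (hgm : ∀ x ∈ I, deriv g x / deriv (deriv g) x = m x) :
    (∀ n : ℕ, ∀ x y : Fin (n + 1) → ℝ, (∀ i, x i ∈ I) → (∀ i, y i ∈ I) →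
      QAMean I g (fun i => (x i + y i) / 2) ≤ (QAMean I g x + QAMean I g y) / 2) ∧
    (∀ n : ℕ, ∀ a : Fin (n + 1) → ℝ, (∀ i, a i ∈ I) →
      QAMean I g a ≤ QAMean I f a) ∧
    (∀ h : ℝ → ℝ, memU0 I f h → ∀ n : ℕ, ∀ a : Fin (n + 1) → ℝ, (∀ i, a i ∈ I) →
      QAMean I h a ≤ QAMean I g a) ∧
    (∀ n : ℕ, ∀ a : Fin (n + 1) → ℝ, (∀ i, a i ∈ I) →
      sSup {t : ℝ | ∃ h : ℝ → ℝ, memU0 I f h ∧ t = QAMean I h a} = QAMean I g a) := by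
  have hfr : ∀ x ∈ I, 0 < deriv f x / deriv (deriv f) x := fun x hx =>
    div_pos (hf' x hx) (hf'' x hx)
  have hfg : ∀ x ∈ I, deriv f x / deriv (deriv f) x ≤ deriv g x / deriv (deriv g) x := by
    intro x hx
    rw [hgm x hx, hm x hx]
    exact le_sInf_concaveMajorantValues hx (hmne x hx)
  have hgr : ∀ x ∈ I, 0 < deriv g x / deriv (deriv g) x := fun x hx =>
    (hfr x hx).trans_le (hfg x hx)
  have hgu : ConcaveOn ℝ I fun x => deriv g x / deriv (deriv g) x :=
    (concaveOn_sInf_concaveMajorantValues hIcv hmne).congr fun x hx => by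
      rw [hgm x hx, hm x hx]
      rfl
  have hgU0 : memU0 I f g := ⟨hg, fun x hx => (div_ne_zero_iff.1 (hgr x hx).ne').1,
    fun x hx => (div_ne_zero_iff.1 (hgr x hx).ne').2, hgu, hfg⟩
  have hlower : ∀ h, memU0 I f h → ∀ n : ℕ, ∀ a : Fin (n + 1) → ℝ, (∀ i, a i ∈ I) →
      QAMean I h a ≤ QAMean I g a := by
    rintro h ⟨hh, -, hh'', hhu, hfh⟩ n a ha
    refine QAMean_le_of_div_deriv_le hIop hIcv hh hg hgr (fun x hx => ?_) ha
    rw [hgm x hx, hm x hx]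
    exact sInf_concaveMajorantValues_le hx ((hh.continuousOn_deriv_of_isOpen hIop one_le_two).div
      ((hh.deriv_of_isOpen hIop (by norm_num)).continuousOn_deriv_of_isOpen hIop le_rfl) hh'')
      hhu hfh
  refine ⟨fun n x y hx hy => QAMean_add_div_two_le hIop hIcv hg hgr hgu hx hy,
    fun n a ha => QAMean_le_of_div_deriv_le hIop hIcv hg hf hfr hfg ha, hlower,
    fun n a ha => ?_⟩
  exact IsGreatest.csSup_eq ⟨⟨g, hgU0, rfl⟩, by rintro _ ⟨h, hh, rfl⟩; exact hlower h hh n a ha⟩
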